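/- The normalized information distance d_I(X,Y) = max(H(X|Y),H(Y|X))/max(H(X),H(Y)) satisfies the triangle inequality d_I(X,Y) ≤ d_I(X,Z) + d_I(Z,Y), provided max(H(X),H(Y)), max(H(X),H(Z)), max(H(Y),H(Z)) are positive. -/

import Mathlib

open Real

/-- Shannon entropy of a discrete random variable `X` on a finite probability
space with weights `p`. -/
noncomputable def ent {Ω S : Type*} [Fintype Ω] [Fintype S] [DecidableEq S]
    (p : Ω → ℝ) (X : Ω → S) : ℝ :=
  ∑ s : S, Real.negMulLog (∑ ω ∈ Finset.univ.filter (fun ω => X ω = s), p ω)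

/-- Conditional entropy `H(X|Y) = H(X,Y) - H(Y)`. -/
noncomputable def condEnt {Ω S T : Type*} [Fintype Ω] [Fintype S] [Fintype T]
    [DecidableEq S] [DecidableEq T] (p : Ω → ℝ) (X : Ω → S) (Y : Ω → T) : ℝ :=
  ent p (fun ω => (X ω, Y ω)) - ent p Y

/-- Mutual information `I(X;Y) = H(X) + H(Y) - H(X,Y)`. -/
noncomputable def mutualInfo {Ω S T : Type*} [Fintype Ω] [Fintype S] [Fintype T]
    [DecidableEq S] [DecidableEq T] (p : Ω → ℝ) (X : Ω → S) (Y : Ω → T) : ℝ :=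
  ent p X + ent p Y - ent p (fun ω => (X ω, Y ω))

/-!
Since `max (H(X|Y), H(Y|X)) = max (H X, H Y) - I(X;Y)`, the distance is
`1 - I(X;Y) / max (H X, H Y)`, and the triangle inequality becomes an inequality between reals
that only needs `0 ≤ I(X;Y)`, `I(X;Z) ≤ H X` and `I(X;Z) + I(Y;Z) ≤ I(X;Y) + H Z`. The last one is
submodularity of entropy, `H(X,Y) + H Z ≤ H(X,Y,Z) + H Z ≤ H(X,Z) + H(Y,Z)`, whose second step is
subadditivity of entropy conditioned on each value of `Z`. Subadditivity is Gibbs' inequality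
against the product of the marginals, i.e. `log x ≤ x - 1` summed over the joint values.
-/

open Finset

theorem negMulLog_sum_le {ι : Type*} (s : Finset ι) {a : ι → ℝ}
    (ha : ∀ i ∈ s, 0 ≤ a i) :
    negMulLog (∑ i ∈ s, a i) ≤ ∑ i ∈ s, negMulLog (a i) := by
  rw [negMulLog, neg_mul, sum_mul, ← sum_neg_distrib]
  refine sum_le_sum fun i hi => ?_
  rcases (ha i hi).eq_or_lt with h0 | hpos
  · simp [← h0]
  · rw [negMulLog, neg_mul, neg_le_neg_iff]
    exact mul_le_mul_of_nonneg_left (log_le_log hpos (single_le_sum ha hi)) hpos.le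

/-- `log x ≤ x - 1` at `x = m * n / (r * M)`, multiplied by `r`. -/
theorem negMulLog_add_mul_log_le {r m n M : ℝ} (hr : 0 ≤ r) (hrm : r ≤ m) (hrn : r ≤ n)
    (hrM : r ≤ M) :
    negMulLog r + r * log m + r * log n - r * log M ≤ m * n / M - r := by
  rcases hr.eq_or_lt with rfl | hpos
  · have : 0 ≤ m * n / M := by positivity
    simpa using this
  · have hm := hpos.trans_le hrm
    have hn := hpos.trans_le hrn
    have hM := hpos.trans_le hrM
    have hlog := log_le_sub_one_of_pos (x := m * n / (r * M)) (by positivity)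
    rw [log_div (by positivity) (by positivity), log_mul hm.ne' hn.ne',
      log_mul hpos.ne' hM.ne'] at hlog
    have hx : r * (m * n / (r * M)) = m * n / M := by field_simp
    rw [negMulLog]
    nlinarith [mul_le_mul_of_nonneg_left hlog hpos.le]

theorem sum_negMulLog_add_negMulLog_sum_le {S T : Type*} [Fintype S] [Fintype T]
    (r : S → T → ℝ) (hr : ∀ s t, 0 ≤ r s t) :
    ∑ s, ∑ t, negMulLog (r s t) + negMulLog (∑ s, ∑ t, r s t) ≤
      ∑ s, negMulLog (∑ t, r s t) + ∑ t, negMulLog (∑ s, r s t) := by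
  set m : S → ℝ := fun s => ∑ t, r s t
  set n : T → ℝ := fun t => ∑ s, r s t
  set M : ℝ := ∑ s, ∑ t, r s t
  have hm : ∀ s t, r s t ≤ m s := fun s t => single_le_sum (fun t _ => hr s t) (mem_univ t)
  have hn : ∀ s t, r s t ≤ n t := fun s t => single_le_sum (fun s _ => hr s t) (mem_univ s)
  have hM : ∀ s t, r s t ≤ M := fun s t =>
    (hm s t).trans (single_le_sum (fun s _ => sum_nonneg fun t _ => hr s t) (mem_univ s))
  have hnM : ∑ t, n t = M := sum_comm
  have hlhs : ∑ s, ∑ t, (negMulLog (r s t) + r s t * log (m s) +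
      r s t * log (n t) - r s t * log M) =
      ∑ s, ∑ t, negMulLog (r s t) - ∑ s, negMulLog (m s) -
        ∑ t, negMulLog (n t) + negMulLog M := by
    simp only [sum_add_distrib, sum_sub_distrib, ← sum_mul, negMulLog]
    rw [sum_comm (f := fun s t => r s t * log (n t))]
    simp only [← sum_mul, neg_mul, sum_neg_distrib]
    ring
  have hrhs : ∑ s, ∑ t, (m s * n t / M - r s t) = 0 := by
    simp only [sum_sub_distrib, ← sum_div, ← mul_sum, ← sum_mul, hnM]
    change M * M / M - M = 0
    rw [mul_self_div_self, sub_self]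
  have := sum_le_sum fun s (_ : s ∈ univ) => sum_le_sum fun t (_ : t ∈ univ) =>
    negMulLog_add_mul_log_le (hr s t) (hm s t) (hn s t) (hM s t)
  linarith

noncomputable def law {Ω A : Type*} [Fintype Ω] [DecidableEq A] (p : Ω → ℝ) (W : Ω → A)
    (a : A) : ℝ :=
  ∑ ω ∈ univ.filter (fun ω => W ω = a), p ω

section Law

variable {Ω A B T : Type*} [Fintype Ω] {p : Ω → ℝ}

theorem ent_eq_sum_law [Fintype A] [DecidableEq A] (W : Ω → A) :
    ent p W = ∑ a, negMulLog (law p W a) := rfl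

theorem law_nonneg [DecidableEq A] (hp0 : ∀ ω, 0 ≤ p ω) (W : Ω → A) (a : A) :
    0 ≤ law p W a :=
  sum_nonneg fun ω _ => hp0 ω

theorem sum_law [Fintype A] [DecidableEq A] (W : Ω → A) :
    ∑ a, law p W a = ∑ ω, p ω :=
  sum_fiberwise univ W p

theorem law_eq_of_iff [DecidableEq A] [DecidableEq B] {W : Ω → A} {V : Ω → B} {a : A} {b : B}
    (h : ∀ ω, W ω = a ↔ V ω = b) : law p W a = law p V b :=
  sum_congr (filter_congr fun ω _ => h ω) fun _ _ => rfl

theorem law_comp [Fintype A] [DecidableEq A] [DecidableEq B] (W : Ω → A) (f : A → B) (b : B) :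
    law p (fun ω => f (W ω)) b = ∑ a ∈ univ.filter (fun a => f a = b), law p W a := by
  simp only [law]
  rw [sum_fiberwise_eq_sum_filter]
  exact sum_congr (filter_congr fun ω _ => by simp) fun _ _ => rfl

theorem sum_law_eq_law [Fintype T] [DecidableEq A] [DecidableEq B] [DecidableEq T]
    {V : Ω → B} {W : Ω → A} {Y : Ω → T} {b : T → B} {a : A}
    (h : ∀ ω t, V ω = b t ↔ W ω = a ∧ Y ω = t) :
    ∑ t, law p V (b t) = law p W a := by
  rw [law, ← sum_fiberwise _ Y p]
  refine sum_congr rfl fun t _ => ?_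
  rw [filter_filter]
  exact sum_congr (filter_congr fun ω _ => h ω t) fun _ _ => rfl

end Law

section Entropy

variable {Ω A B S T U : Type*} [Fintype Ω] [Fintype S] [Fintype T] [Fintype U]
  [DecidableEq S] [DecidableEq T] [DecidableEq U] {p : Ω → ℝ}

theorem ent_comp_le [Fintype A] [Fintype B] [DecidableEq A] [DecidableEq B]
    (hp0 : ∀ ω, 0 ≤ p ω) (W : Ω → A) (f : A → B) :
    ent p (fun ω => f (W ω)) ≤ ent p W :=
  calc ent p (fun ω => f (W ω))
      = ∑ b, negMulLog (∑ a ∈ univ.filter (fun a => f a = b), law p W a) := by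
        simp only [ent_eq_sum_law, law_comp]
    _ ≤ ∑ b, ∑ a ∈ univ.filter (fun a => f a = b), negMulLog (law p W a) :=
        sum_le_sum fun b _ => negMulLog_sum_le _ fun a _ => law_nonneg hp0 W a
    _ = ent p W := sum_fiberwise univ f _

theorem ent_comp_equiv [Fintype A] [Fintype B] [DecidableEq A] [DecidableEq B]
    (W : Ω → A) (e : A ≃ B) : ent p (fun ω => e (W ω)) = ent p W := by
  rw [ent_eq_sum_law, ent_eq_sum_law, ← e.sum_comp]
  exact sum_congr rfl fun a _ => by rw [law_eq_of_iff fun ω => e.injective.eq_iff]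

theorem ent_pair_comm (X : Ω → S) (Y : Ω → T) :
    ent p (fun ω => (Y ω, X ω)) = ent p (fun ω => (X ω, Y ω)) :=
  ent_comp_equiv (fun ω => (X ω, Y ω)) (Equiv.prodComm S T)

theorem ent_pair_le_add (hp0 : ∀ ω, 0 ≤ p ω) (hp1 : ∑ ω, p ω = 1)
    (X : Ω → S) (Y : Ω → T) :
    ent p (fun ω => (X ω, Y ω)) ≤ ent p X + ent p Y := by
  have h := sum_negMulLog_add_negMulLog_sum_le (fun s t => law p (fun ω => (X ω, Y ω)) (s, t))
    fun s t => law_nonneg hp0 _ _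
  have hX : ∀ s, ∑ t, law p (fun ω => (X ω, Y ω)) (s, t) = law p X s := fun s =>
    sum_law_eq_law fun ω t => Prod.ext_iff
  have hY : ∀ t, ∑ s, law p (fun ω => (X ω, Y ω)) (s, t) = law p Y t := fun t =>
    sum_law_eq_law fun ω s => Prod.ext_iff.trans and_comm
  simp only [hX, hY, sum_law, hp1, negMulLog_one, add_zero] at h
  rwa [ent_eq_sum_law, Fintype.sum_prod_type]

theorem ent_triple_add_le (hp0 : ∀ ω, 0 ≤ p ω) (X : Ω → S) (Y : Ω → T) (Z : Ω → U) :
    ent p (fun ω => (X ω, Y ω, Z ω)) + ent p Z ≤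
      ent p (fun ω => (X ω, Z ω)) + ent p (fun ω => (Y ω, Z ω)) := by
  set q : S → T → U → ℝ := fun s t u => law p (fun ω => (X ω, Y ω, Z ω)) (s, t, u)
  have hXZ : ∀ s u, ∑ t, q s t u = law p (fun ω => (X ω, Z ω)) (s, u) := fun s u =>
    sum_law_eq_law fun ω t => by simp only [Prod.ext_iff]; tauto
  have hYZ : ∀ t u, ∑ s, q s t u = law p (fun ω => (Y ω, Z ω)) (t, u) := fun t u =>
    sum_law_eq_law fun ω s => by simp only [Prod.ext_iff]; tauto
  have hZ : ∀ u, ∑ s, ∑ t, q s t u = law p Z u := fun u => by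
    rw [sum_comm]
    simp only [hYZ]
    exact sum_law_eq_law fun ω t => Prod.ext_iff.trans and_comm
  have h := sum_le_sum fun u (_ : u ∈ univ) =>
    sum_negMulLog_add_negMulLog_sum_le (fun s t => q s t u) fun s t => law_nonneg hp0 _ _
  simp only [hZ] at h
  simp only [hXZ, hYZ, sum_add_distrib, sum_comm (γ := U)] at h
  simpa only [ent_eq_sum_law, Fintype.sum_prod_type] using h

end Entropy

section MutualInfo

variable {Ω S T U : Type*} [Fintype Ω] [Fintype S] [Fintype T] [Fintype U]
  [DecidableEq S] [DecidableEq T] [DecidableEq U] {p : Ω → ℝ}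

theorem mutualInfo_nonneg (hp0 : ∀ ω, 0 ≤ p ω) (hp1 : ∑ ω, p ω = 1)
    (X : Ω → S) (Y : Ω → T) :
    0 ≤ mutualInfo p X Y := by
  have := ent_pair_le_add hp0 hp1 X Y
  rw [mutualInfo]
  linarith

theorem mutualInfo_le_ent_left (hp0 : ∀ ω, 0 ≤ p ω) (X : Ω → S) (Y : Ω → T) :
    mutualInfo p X Y ≤ ent p X := by
  have := ent_comp_le hp0 (fun ω => (X ω, Y ω)) Prod.snd
  rw [mutualInfo]
  linarith

theorem mutualInfo_add_mutualInfo_le (hp0 : ∀ ω, 0 ≤ p ω)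
    (X : Ω → S) (Y : Ω → T) (Z : Ω → U) :
    mutualInfo p X Z + mutualInfo p Y Z ≤ mutualInfo p X Y + ent p Z := by
  have hmono := ent_comp_le hp0 (fun ω => (X ω, Y ω, Z ω)) fun a => (a.1, a.2.1)
  have hsub := ent_triple_add_le hp0 X Y Z
  simp only [mutualInfo]
  linarith

theorem max_condEnt_eq (X : Ω → S) (Y : Ω → T) :
    max (condEnt p X Y) (condEnt p Y X) = max (ent p X) (ent p Y) - mutualInfo p X Y := by
  rw [condEnt, condEnt, mutualInfo, ent_pair_comm, max_sub_sub_left, min_comm,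
    ← min_add_max (ent p X)]
  ring

end MutualInfo

theorem max_sub_div_max_triangle {a b c i j k : ℝ} (hi : 0 ≤ i) (hj : j ≤ max a c)
    (hk : k ≤ max b c) (hijk : j + k ≤ i + c)
    (hab : 0 < max a b) (hac : 0 < max a c) (hbc : 0 < max b c) :
    (max a b - i) / max a b ≤ (max a c - j) / max a c + (max b c - k) / max b c := by
  rcases le_or_gt c (max a b) with hc | hc
  · have hac_le : max a c ≤ max a b := max_le (le_max_left a b) hc
    have hbc_le : max b c ≤ max a b := max_le (le_max_right a b) hc
    have hsum : max a b + c ≤ max a c + max b c := by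
      rcases le_total a b with h | h <;> simp only [max_def] <;> split_ifs <;> linarith
    calc (max a b - i) / max a b
        ≤ ((max a c - j) + (max b c - k)) / max a b := by gcongr; linarith
      _ = (max a c - j) / max a b + (max b c - k) / max a b := add_div _ _ _
      _ ≤ (max a c - j) / max a c + (max b c - k) / max b c := by
        gcongr
  · rw [max_eq_right ((le_max_left a b).trans hc.le),
      max_eq_right ((le_max_right a b).trans hc.le)]
    have hc0 : 0 < c := hab.trans hc
    have hic : i / c ≤ i / max a b := div_le_div_of_nonneg_left hi hab hc.le
    calc (max a b - i) / max a b = 1 - i / max a b := by rw [sub_div, div_self hab.ne']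
      _ ≤ 2 - (i + c) / c := by rw [add_div, div_self hc0.ne']; linarith
      _ ≤ 2 - (j + k) / c := by gcongr
      _ = (c - j) / c + (c - k) / c := by field_simp; ring

theorem normalized_informationDistance_triangle {Ω S T U : Type*} [Fintype Ω] [Fintype S]
    [Fintype T] [Fintype U] [DecidableEq S] [DecidableEq T] [DecidableEq U]
    (p : Ω → ℝ) (hp0 : ∀ ω, 0 ≤ p ω) (hp1 : ∑ ω, p ω = 1)
    (X : Ω → S) (Y : Ω → T) (Z : Ω → U)
    (hXY : 0 < max (ent p X) (ent p Y))
    (hXZ : 0 < max (ent p X) (ent p Z))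
    (hYZ : 0 < max (ent p Y) (ent p Z)) :
    max (condEnt p X Y) (condEnt p Y X) / max (ent p X) (ent p Y) ≤
      max (condEnt p X Z) (condEnt p Z X) / max (ent p X) (ent p Z) +
        max (condEnt p Z Y) (condEnt p Y Z) / max (ent p Y) (ent p Z) := by
  rw [max_condEnt_eq, max_condEnt_eq, max_comm (condEnt p Z Y), max_condEnt_eq]
  exact max_sub_div_max_triangle (mutualInfo_nonneg hp0 hp1 X Y)
    ((mutualInfo_le_ent_left hp0 X Z).trans (le_max_left _ _))
    ((mutualInfo_le_ent_left hp0 Y Z).trans (le_max_left _ _))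
    (mutualInfo_add_mutualInfo_le hp0 X Y Z) hXY hXZ hYZ
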